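/- Let X be a nonempty set, W = W(X) the free monoid on X, and F = A × W the free right W-act with basis A, equipped with degree functions deg_X : X → ℕ with deg_X(x) ≥ 1 for all x ∈ X and deg_A : A → ℕ, extended additively to W and by deg(a,w) = deg_A(a) + deg(w) to F. Let P and Q be subacts of F such that for every n ∈ ℕ the sets of elements of degree n in P and in Q are finite. Then for every n ∈ ℕ the sets of elements of degree n in the canonical bases B_P, B_Q, B_{P∪Q}, B_{P∩Q} are finite and c_n(B_P) + c_n(B_Q) = c_n(B_{P∪Q}) + c_n(B_{P∩Q}); equivalently H(B_P,t) + H(B_Q,t) = H(B_{P∪Q},t) + H(B_{P∩Q},t). -/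

import Mathlib

/-- A subset `P` of the free right act `F = A × W(X)` (with action `(a,w)·u = (a, w*u)`)
is a subact if it is closed under the action of the free monoid `W(X)`. -/
def IsSubact {A X : Type*} (P : Set (A × FreeMonoid X)) : Prop :=
  ∀ p ∈ P, ∀ u : FreeMonoid X, (p.1, p.2 * u) ∈ P

/-- The canonical basis of a subact `P` of the free act `A × W(X)`. -/
def canonicalBasis {A X : Type*} (P : Set (A × FreeMonoid X)) : Set (A × FreeMonoid X) :=
  {p | p ∈ P ∧ (p.2 = 1 ∨
    ∃ (w : FreeMonoid X) (x : X), p.2 = w * FreeMonoid.of x ∧ (p.1, w) ∉ P)}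

/-- The additive extension of a degree function `degX : X → ℕ` to the free monoid `W(X)`. -/
def monoidDeg {X : Type*} (degX : X → ℕ) (w : FreeMonoid X) : ℕ :=
  ((FreeMonoid.toList w).map degX).sum

/-- The degree of an element `(a,w)` of the free act `A × W(X)`:
`deg (a,w) = deg_A a + deg w`. -/
def actDeg {A X : Type*} (degA : A → ℕ) (degX : X → ℕ) (p : A × FreeMonoid X) : ℕ :=
  degA p.1 + monoidDeg degX p.2

/-!
An element `(a, w x)` lies in the canonical basis `B_P` exactly when `(a, w x) ∈ P` and
`(a, w) ∉ P`, and `(a, 1)` lies in `B_P` exactly when it lies in `P`. Since subacts are closed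
under right multiplication, a case check on these two conditions shows that the pairs
`B_P, B_Q` and `B_{P ∪ Q}, B_{P ∩ Q}` have the same union and the same intersection.
Inclusion–exclusion, applied degree by degree, then gives the equality of the counts;
finiteness in each degree holds because every `B_S` is contained in `S`.
-/

namespace FreeMonoid

variable {α : Type*}

theorem mul_of_ne_one (w : FreeMonoid α) (x : α) : w * of x ≠ 1 := by
  intro h
  simpa using congrArg toList h

theorem mul_of_inj {w w' : FreeMonoid α} {x x' : α} :
    w * of x = w' * of x' ↔ w = w' ∧ x = x' := by
  rw [← toList.injective.eq_iff, toList_mul, toList_mul, toList_of, toList_of,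
    List.append_singleton_inj, toList.injective.eq_iff]

theorem eq_one_or_exists_eq_mul_of (w : FreeMonoid α) : w = 1 ∨ ∃ v x, w = v * of x := by
  rcases List.eq_nil_or_concat (toList w) with h | ⟨l, x, h⟩
  · exact .inl (toList.injective h)
  · exact .inr ⟨ofList l, x, toList.injective (by simpa using h)⟩

end FreeMonoid

open FreeMonoid

section CanonicalBasis

variable {A X : Type*} {P Q : Set (A × FreeMonoid X)}

theorem canonicalBasis_subset : canonicalBasis P ⊆ P := fun _ hp => hp.1

theorem mem_canonicalBasis_one_iff (a : A) :
    (a, (1 : FreeMonoid X)) ∈ canonicalBasis P ↔ (a, (1 : FreeMonoid X)) ∈ P :=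
  ⟨fun h => h.1, fun h => ⟨h, .inl rfl⟩⟩

theorem mem_canonicalBasis_mul_of_iff (a : A) (w : FreeMonoid X) (x : X) :
    (a, w * of x) ∈ canonicalBasis P ↔ (a, w * of x) ∈ P ∧ (a, w) ∉ P := by
  constructor
  · rintro ⟨hp, hw | ⟨v, y, hv, hnot⟩⟩
    · exact absurd hw (mul_of_ne_one w x)
    · obtain ⟨rfl, rfl⟩ := mul_of_inj.mp hv
      exact ⟨hp, hnot⟩
  · rintro ⟨hp, hnot⟩
    exact ⟨hp, .inr ⟨w, x, rfl, hnot⟩⟩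

theorem canonicalBasis_union_union_canonicalBasis_inter (hP : IsSubact P) (hQ : IsSubact Q) :
    canonicalBasis (P ∪ Q) ∪ canonicalBasis (P ∩ Q) = canonicalBasis P ∪ canonicalBasis Q := by
  ext ⟨a, w⟩
  rcases eq_one_or_exists_eq_mul_of w with rfl | ⟨v, x, rfl⟩
  · simp only [Set.mem_union, mem_canonicalBasis_one_iff, Set.mem_inter_iff]
    tauto
  · have hPx : (a, v) ∈ P → (a, v * of x) ∈ P := fun h => hP _ h (of x)
    have hQx : (a, v) ∈ Q → (a, v * of x) ∈ Q := fun h => hQ _ h (of x)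
    simp only [Set.mem_union, mem_canonicalBasis_mul_of_iff, Set.mem_inter_iff]
    tauto

theorem canonicalBasis_union_inter_canonicalBasis_inter :
    canonicalBasis (P ∪ Q) ∩ canonicalBasis (P ∩ Q) = canonicalBasis P ∩ canonicalBasis Q := by
  ext ⟨a, w⟩
  rcases eq_one_or_exists_eq_mul_of w with rfl | ⟨v, x, rfl⟩
  · simp only [Set.mem_inter_iff, mem_canonicalBasis_one_iff, Set.mem_union]
    tauto
  · simp only [Set.mem_inter_iff, mem_canonicalBasis_mul_of_iff, Set.mem_union]
    tauto

end CanonicalBasis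

theorem Set.ncard_add_ncard_eq_of_union_eq_of_inter_eq {α : Type*} {s t u v : Set α}
    (hs : s.Finite) (ht : t.Finite) (hu : u.Finite) (hv : v.Finite)
    (hunion : u ∪ v = s ∪ t) (hinter : u ∩ v = s ∩ t) :
    s.ncard + t.ncard = u.ncard + v.ncard := by
  rw [← Set.ncard_union_add_ncard_inter s t hs ht, ← hunion, ← hinter,
    Set.ncard_union_add_ncard_inter u v hu hv]

theorem hilbert_series_union_inter_subacts_general {A X : Type*}
    (degX : X → ℕ) (degA : A → ℕ)
    (P Q : Set (A × FreeMonoid X)) (hP : IsSubact P) (hQ : IsSubact Q)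
    (hPfin : ∀ n : ℕ, {p | p ∈ P ∧ actDeg degA degX p = n}.Finite)
    (hQfin : ∀ n : ℕ, {p | p ∈ Q ∧ actDeg degA degX p = n}.Finite) :
    ∀ n : ℕ,
      {b | b ∈ canonicalBasis P ∧ actDeg degA degX b = n}.Finite ∧
      {b | b ∈ canonicalBasis Q ∧ actDeg degA degX b = n}.Finite ∧
      {b | b ∈ canonicalBasis (P ∪ Q) ∧ actDeg degA degX b = n}.Finite ∧
      {b | b ∈ canonicalBasis (P ∩ Q) ∧ actDeg degA degX b = n}.Finite ∧
      {b | b ∈ canonicalBasis P ∧ actDeg degA degX b = n}.ncard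
        + {b | b ∈ canonicalBasis Q ∧ actDeg degA degX b = n}.ncard =
      {b | b ∈ canonicalBasis (P ∪ Q) ∧ actDeg degA degX b = n}.ncard
        + {b | b ∈ canonicalBasis (P ∩ Q) ∧ actDeg degA degX b = n}.ncard := by
  intro n
  set D := {b : A × FreeMonoid X | actDeg degA degX b = n}
  have hPD : (P ∩ D).Finite := hPfin n
  have hQD : (Q ∩ D).Finite := hQfin n
  have hBP : (canonicalBasis P ∩ D).Finite :=
    hPD.subset (Set.inter_subset_inter_left D canonicalBasis_subset)
  have hBQ : (canonicalBasis Q ∩ D).Finite :=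
    hQD.subset (Set.inter_subset_inter_left D canonicalBasis_subset)
  have hBU : (canonicalBasis (P ∪ Q) ∩ D).Finite := by
    refine (hPD.union hQD).subset ?_
    rw [← Set.union_inter_distrib_right]
    exact Set.inter_subset_inter_left D canonicalBasis_subset
  have hBI : (canonicalBasis (P ∩ Q) ∩ D).Finite :=
    hPD.subset (Set.inter_subset_inter_left D (canonicalBasis_subset.trans Set.inter_subset_left))
  have hunion : canonicalBasis (P ∪ Q) ∩ D ∪ canonicalBasis (P ∩ Q) ∩ D =
      canonicalBasis P ∩ D ∪ canonicalBasis Q ∩ D := by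
    rw [← Set.union_inter_distrib_right, ← Set.union_inter_distrib_right,
      canonicalBasis_union_union_canonicalBasis_inter hP hQ]
  have hinter : canonicalBasis (P ∪ Q) ∩ D ∩ (canonicalBasis (P ∩ Q) ∩ D) =
      canonicalBasis P ∩ D ∩ (canonicalBasis Q ∩ D) := by
    rw [← Set.inter_inter_distrib_right, ← Set.inter_inter_distrib_right,
      canonicalBasis_union_inter_canonicalBasis_inter]
  exact ⟨hBP, hBQ, hBU, hBI,
    Set.ncard_add_ncard_eq_of_union_eq_of_inter_eq hBP hBQ hBU hBI hunion hinter⟩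

/-- Grassmann-type formula for the Hilbert series of the canonical bases of subacts
of a free act over a free monoid:
`H(B_P,t) + H(B_Q,t) = H(B_{P∪Q},t) + H(B_{P∩Q},t)`, coefficientwise. -/
theorem hilbert_series_union_inter_subacts {A X : Type*} [Nonempty X]
    (degX : X → ℕ) (degA : A → ℕ) (hdegX : ∀ x, 1 ≤ degX x)
    (P Q : Set (A × FreeMonoid X)) (hP : IsSubact P) (hQ : IsSubact Q)
    (hPfin : ∀ n : ℕ, {p | p ∈ P ∧ actDeg degA degX p = n}.Finite)
    (hQfin : ∀ n : ℕ, {p | p ∈ Q ∧ actDeg degA degX p = n}.Finite) :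
    ∀ n : ℕ,
      {b | b ∈ canonicalBasis P ∧ actDeg degA degX b = n}.Finite ∧
      {b | b ∈ canonicalBasis Q ∧ actDeg degA degX b = n}.Finite ∧
      {b | b ∈ canonicalBasis (P ∪ Q) ∧ actDeg degA degX b = n}.Finite ∧
      {b | b ∈ canonicalBasis (P ∩ Q) ∧ actDeg degA degX b = n}.Finite ∧
      {b | b ∈ canonicalBasis P ∧ actDeg degA degX b = n}.ncard
        + {b | b ∈ canonicalBasis Q ∧ actDeg degA degX b = n}.ncard =
      {b | b ∈ canonicalBasis (P ∪ Q) ∧ actDeg degA degX b = n}.ncard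
        + {b | b ∈ canonicalBasis (P ∩ Q) ∧ actDeg degA degX b = n}.ncard :=
  hilbert_series_union_inter_subacts_general degX degA P Q hP hQ hPfin hQfin
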